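/- arXiv:1510.03912 — 2 statements merged into one kernel-verified Lean document; each statement's English description precedes it below -/
import Mathlib

section
/- If F is an intersecting subfamily of V(n,k,1) (no two vectors with scalar product -2), then the family P(F) ⊂ V(n+1,k,1), obtained by appending a 0 coordinate to each vector of F and adding all vectors of V(n+1,k,1) whose (n+1)-st coordinate is -1, is intersecting and has cardinality |F| + binom(n,k). -/
/-!
Write a vector of `V (n+1) k 1` as `(u, x)` with `x` its last coordinate. The vectors of `P(F)` with
`x = -1` are exactly the `(u, -1)` with `u ∈ V n k 0`, i.e. `u` the indicator of a `k`-subset of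
`[n]`, so there are `n.choose k` of them, and they are disjoint from the `(v, 0)` with `v ∈ F`.
Two of the new vectors have scalar product `⟪u, u'⟫ + 1 ≥ 1`, and a new vector meets an old one in
`⟪v, u⟫ ≥ -1`, because `u` is `0/1`-valued and `v` has a single `-1`; so `-2` never occurs.
-/

/-- `V n k l` : vectors in `{0,±1}^n` with exactly `k` coordinates `+1` and
exactly `l` coordinates `-1`. -/
def V (n k l : ℕ) : Set (Fin n → ℤ) :=
  {v | (∀ i, v i = 0 ∨ v i = 1 ∨ v i = -1) ∧
       (Finset.univ.filter fun i => v i = 1).card = k ∧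
       (Finset.univ.filter fun i => v i = -1).card = l}

/-- scalar product -/
def dot {n : ℕ} (v w : Fin n → ℤ) : ℤ := ∑ i, v i * w i

/-- the family `P(F) ⊆ V (n+1) k 1` obtained from `F ⊆ V n k 1` by appending a `0`
coordinate to each member of `F` and adding all vectors of `V (n+1) k 1` whose last
coordinate is `-1`. -/
def PF (n k : ℕ) (F : Set (Fin n → ℤ)) : Set (Fin (n + 1) → ℤ) :=
  ((fun v : Fin n → ℤ => Fin.snoc v 0) '' F) ∪
    {w ∈ V (n + 1) k 1 | w (Fin.last n) = -1}

lemma card_filter_snoc_eq {α : Type*} [DecidableEq α] {n : ℕ} (v : Fin n → α) (x a : α) :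
    (Finset.univ.filter fun i => (Fin.snoc v x : Fin (n + 1) → α) i = a).card
      = (Finset.univ.filter fun i => v i = a).card + if x = a then 1 else 0 := by
  rw [Finset.card_filter, Finset.card_filter, Fin.sum_univ_castSucc]
  simp only [Fin.snoc_castSucc, Fin.snoc_last]

lemma snoc_zero_mem_V_iff {n k l : ℕ} {v : Fin n → ℤ} :
    Fin.snoc v 0 ∈ V (n + 1) k l ↔ v ∈ V n k l := by
  simp only [V, Set.mem_ofPred_eq, card_filter_snoc_eq, Fin.forall_fin_succ', Fin.snoc_castSucc,
    Fin.snoc_last]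
  norm_num

lemma snoc_neg_one_mem_V_iff {n k l : ℕ} {v : Fin n → ℤ} :
    Fin.snoc v (-1) ∈ V (n + 1) k (l + 1) ↔ v ∈ V n k l := by
  simp only [V, Set.mem_ofPred_eq, card_filter_snoc_eq, Fin.forall_fin_succ', Fin.snoc_castSucc,
    Fin.snoc_last]
  norm_num

lemma setOf_mem_V_last_eq_neg_one (n k l : ℕ) :
    {w ∈ V (n + 1) k (l + 1) | w (Fin.last n) = -1} = (Fin.snoc · (-1)) '' V n k l := by
  ext w
  constructor
  · rintro ⟨hw, hlast⟩
    rw [← Fin.snoc_init_self w, hlast] at hw ⊢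
    exact ⟨_, snoc_neg_one_mem_V_iff.1 hw, rfl⟩
  · rintro ⟨v, hv, rfl⟩
    exact ⟨snoc_neg_one_mem_V_iff.2 hv, Fin.snoc_last _ _⟩

lemma PF_eq (n k : ℕ) (F : Set (Fin n → ℤ)) :
    PF n k F = (Fin.snoc · 0) '' F ∪ (Fin.snoc · (-1)) '' V n k 0 := by
  rw [PF, ← setOf_mem_V_last_eq_neg_one]

lemma V_finite (n k l : ℕ) : (V n k l).Finite := by
  refine (Set.Finite.pi fun _ : Fin n => Set.finite_Icc (-1 : ℤ) 1).subset fun v hv i _ => ?_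
  rcases hv.1 i with h | h | h <;> simp [h]

lemma eq_zero_or_eq_one_of_mem_V_zero {n k : ℕ} {v : Fin n → ℤ} (hv : v ∈ V n k 0) (i : Fin n) :
    v i = 0 ∨ v i = 1 := by
  obtain ⟨hv, -, hneg⟩ := hv
  rw [Finset.card_eq_zero, Finset.filter_eq_empty_iff] at hneg
  have := hneg (Finset.mem_univ i)
  have := hv i
  tauto

lemma ncard_V_zero (n k : ℕ) : (V n k 0).ncard = n.choose k := by
  have hchoose : n.choose k = (Finset.univ.powersetCard k : Finset (Finset (Fin n))).card := by
    simp
  rw [hchoose, ← Set.ncard_coe_finset]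
  refine Set.ncard_congr (fun (v : Fin n → ℤ) _ => Finset.univ.filter fun i => v i = 1) ?_ ?_ ?_
  · rintro v ⟨-, hk, -⟩
    simpa [Finset.mem_powersetCard_univ] using hk
  · intro v w hv hw h
    funext i
    have := congrArg (i ∈ ·) h
    simp only [Finset.mem_filter, Finset.mem_univ, true_and, eq_iff_iff] at this
    rcases eq_zero_or_eq_one_of_mem_V_zero hv i with h1 | h1 <;>
      rcases eq_zero_or_eq_one_of_mem_V_zero hw i with h2 | h2 <;> simp_all
  · intro s hs
    rw [Finset.mem_coe, Finset.mem_powersetCard_univ] at hs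
    have hsupp : (Finset.univ.filter fun i => (if i ∈ s then 1 else 0 : ℤ) = 1) = s := by
      ext i; by_cases hi : i ∈ s <;> simp [hi]
    refine ⟨fun i => if i ∈ s then 1 else 0, ⟨fun i => ?_, by simp only [hsupp, hs], ?_⟩, hsupp⟩
    · by_cases hi : i ∈ s <;> simp [hi]
    · rw [Finset.card_eq_zero, Finset.filter_eq_empty_iff]
      intro i _
      by_cases hi : i ∈ s <;> simp [hi]

lemma dot_snoc {n : ℕ} (v w : Fin n → ℤ) (x y : ℤ) :
    dot (Fin.snoc v x) (Fin.snoc w y) = dot v w + x * y := by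
  simp only [dot, Fin.sum_univ_castSucc, Fin.snoc_castSucc, Fin.snoc_last]

lemma dot_comm {n : ℕ} (v w : Fin n → ℤ) : dot v w = dot w v := by
  simp only [dot, mul_comm]

lemma neg_le_dot_of_mem_V {n k l m : ℕ} {v w : Fin n → ℤ} (hv : v ∈ V n k l) (hw : w ∈ V n m 0) :
    -(l : ℤ) ≤ dot v w := by
  obtain ⟨hv, -, rfl⟩ := hv
  have hterm : ∀ i ∈ Finset.univ, (if v i = -1 then (-1 : ℤ) else 0) ≤ v i * w i := fun i _ => by
    rcases eq_zero_or_eq_one_of_mem_V_zero hw i with h1 | h1 <;>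
      rcases hv i with h2 | h2 | h2 <;> simp [h1, h2]
  simpa [Finset.sum_ite, dot] using Finset.sum_le_sum hterm

lemma dot_nonneg_of_mem_V_zero {n k m : ℕ} {v w : Fin n → ℤ} (hv : v ∈ V n k 0)
    (hw : w ∈ V n m 0) : 0 ≤ dot v w := by
  simpa using neg_le_dot_of_mem_V hv hw

lemma disjoint_image_snoc {α : Type*} {n : ℕ} {x y : α} (hxy : x ≠ y) (s t : Set (Fin n → α)) :
    Disjoint ((fun v : Fin n → α => (Fin.snoc v x : Fin (n + 1) → α)) '' s)
      ((fun v : Fin n → α => (Fin.snoc v y : Fin (n + 1) → α)) '' t) := by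
  rw [Set.disjoint_left]
  rintro _ ⟨v, -, rfl⟩ ⟨w, -, h⟩
  exact hxy (by simpa using (congrFun h (Fin.last n)).symm)

theorem stmt_6_general (n k : ℕ)
    (F : Set (Fin n → ℤ)) (hF : F ⊆ V n k 1)
    (hint : ∀ v ∈ F, ∀ w ∈ F, dot v w ≠ -2) :
    PF n k F ⊆ V (n + 1) k 1 ∧
    (∀ v ∈ PF n k F, ∀ w ∈ PF n k F, dot v w ≠ -2) ∧
    (PF n k F).ncard = F.ncard + n.choose k := by
  rw [PF_eq]
  refine ⟨?_, ?_, ?_⟩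
  · rintro _ (⟨v, hv, rfl⟩ | ⟨u, hu, rfl⟩)
    exacts [snoc_zero_mem_V_iff.2 (hF hv), snoc_neg_one_mem_V_iff.2 hu]
  · rintro _ (⟨v, hv, rfl⟩ | ⟨u, hu, rfl⟩) _ (⟨w, hw, rfl⟩ | ⟨u', hu', rfl⟩) <;> rw [dot_snoc]
    · simpa using hint v hv w hw
    · have := neg_le_dot_of_mem_V (hF hv) hu'
      omega
    · have := neg_le_dot_of_mem_V (hF hw) hu
      rw [dot_comm]
      omega
    · have := dot_nonneg_of_mem_V_zero hu hu'
      omega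
  · rw [Set.ncard_union_eq (disjoint_image_snoc (by decide) _ _)
      (((V_finite n k 1).subset hF).image _) ((V_finite n k 0).image _),
      Set.ncard_image_of_injective F (Fin.snoc_left_injective (α := fun _ => ℤ) 0),
      Set.ncard_image_of_injective _ (Fin.snoc_left_injective (α := fun _ => ℤ) (-1)),
      ncard_V_zero]

theorem stmt_6 (n k : ℕ) (hk : 1 ≤ k) (hn : 2 * k ≤ n)
    (F : Set (Fin n → ℤ)) (hF : F ⊆ V n k 1)
    (hint : ∀ v ∈ F, ∀ w ∈ F, dot v w ≠ -2) :
    PF n k F ⊆ V (n + 1) k 1 ∧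
    (∀ v ∈ PF n k F, ∀ w ∈ PF n k F, dot v w ≠ -2) ∧
    (PF n k F).ncard = F.ncard + n.choose k :=
  stmt_6_general n k F hF hint
end

section
/- Fix a cyclic permutation π of [n], n ≥ 2k, and let U(π,k) be the family of the n cyclic intervals of length k. Suppose A, B ⊂ U(π,k) with B ⊂ A and every set of B intersects every set of A. Then for any c ≥ 1, |A| + c|B| ≤ max{n, (c+1)k}. -/
/-- the family of the `n` cyclic intervals of length `m` along the cyclic
arrangement of `[n]` given by the bijection `π : ZMod n ≃ Fin n`. -/
def cycInt (n : ℕ) (π : ZMod n ≃ Fin n) (m : ℕ) : Set (Finset (Fin n)) :=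
  {S | ∃ t : ZMod n, S = (Finset.range m).image fun s : ℕ => π (t + (s : ZMod n))}

/-!
Encode each interval by its starting point in `ZMod n`, and let `SB ⊆ SA` be the starting points
of `B ⊆ A`. If `b ∈ SB`, no `a ∈ SA` lies among the `n - 2k + 1` points
`b + k, …, b + n - k`, because the interval starting at `a` would then miss the one starting
at `b`. These forbidden points form the sumset `(SB + k) + {0, …, n - 2k}`. In `ZMod n`, adding
`{0, 1}` to a proper nonempty subset makes it strictly larger, so the sumset has at least
`min n (|SB| + n - 2k)` elements. It is disjoint from the nonempty set `SA`, which gives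
`|SA| + |SB| ≤ 2k`. Since `|SB| ≤ |SA|`, also `|SB| ≤ k`. Hence
`|A| + c|B| = (|A| + |B|) + (c - 1)|B| ≤ 2k + (c - 1)k = (c + 1)k`.
-/

open Finset Pointwise

lemma Set.ncard_le_card_toFinset_preimage {α β : Type*} {f : α → β} {A : Set β}
    [Fintype (f ⁻¹' A)] (hA : A ⊆ Set.range f) : A.ncard ≤ #(f ⁻¹' A).toFinset :=
  calc A.ncard = (f '' (f ⁻¹' A)).ncard := by rw [Set.image_preimage_eq_of_subset hA]
    _ ≤ (f ⁻¹' A).ncard := Set.ncard_image_le (Set.toFinite _)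
    _ = #(f ⁻¹' A).toFinset := Set.ncard_eq_toFinset_card' _

namespace ZMod

variable {n : ℕ}

def ArcsMeet (k : ℕ) (a b : ZMod n) : Prop :=
  ∃ p < k, ∃ q < k, a + (p : ZMod n) = b + q

lemma not_arcsMeet_add_natCast {k j : ℕ} (hj : 2 * k + j ≤ n) (b : ZMod n) :
    ¬ ArcsMeet k (b + ((k + j : ℕ) : ZMod n)) b := by
  rintro ⟨p, hp, q, hq, hpq⟩
  have hcast : ((k + j + p : ℕ) : ZMod n) = q := by
    push_cast at hpq ⊢
    linear_combination hpq
  rw [natCast_eq_natCast_iff', Nat.mod_eq_of_lt (by omega), Nat.mod_eq_of_lt (by omega)] at hcast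
  omega

variable [NeZero n]

lemma eq_univ_of_add_one_mem {Y : Finset (ZMod n)} (hY : Y.Nonempty)
    (h : ∀ y ∈ Y, y + 1 ∈ Y) : Y = univ := by
  obtain ⟨y, hy⟩ := hY
  have hshift : ∀ m : ℕ, y + m ∈ Y := by
    intro m
    induction m with
    | zero => simpa using hy
    | succ m ih => simpa [add_assoc] using h _ ih
  exact eq_univ_of_forall fun x => by simpa using hshift (x - y).val

lemma card_lt_card_union_image_add_one {Y : Finset (ZMod n)} (hY : Y.Nonempty) (hY' : Y ≠ univ) :
    #Y < #(Y ∪ Y.image (· + 1)) := by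
  refine (card_le_card subset_union_left).lt_of_ne fun hcard => hY' ?_
  have hfix : Y ∪ Y.image (· + 1) = Y :=
    (eq_of_subset_of_card_le subset_union_left hcard.ge).symm
  refine eq_univ_of_add_one_mem hY fun y hy => ?_
  rw [← hfix]
  exact mem_union_right _ (mem_image_of_mem _ hy)

/-- A cyclic analogue of Cauchy–Davenport for sums with an interval. -/
lemma min_le_card_add_image_range {X : Finset (ZMod n)} (hX : X.Nonempty) (L : ℕ) :
    min n (#X + L) ≤ #(X + (range (L + 1)).image (Nat.cast : ℕ → ZMod n)) := by
  induction L with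
  | zero => simp
  | succ L ih =>
    set Y := X + (range (L + 1)).image (Nat.cast : ℕ → ZMod n)
    have hstep :
        Y ∪ Y.image (· + 1) ⊆ X + (range (L + 1 + 1)).image (Nat.cast : ℕ → ZMod n) := by
      intro z hz
      simp only [Y, mem_union, mem_image, mem_add, mem_range] at hz ⊢
      rcases hz with ⟨x, hx, _, ⟨j, hj, rfl⟩, rfl⟩ |
        ⟨_, ⟨x, hx, _, ⟨j, hj, rfl⟩, rfl⟩, rfl⟩
      · exact ⟨x, hx, _, ⟨j, by omega, rfl⟩, rfl⟩
      · exact ⟨x, hx, _, ⟨j + 1, by omega, rfl⟩, by push_cast; ring⟩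
    by_cases hY : Y = univ
    · rw [eq_univ_of_forall fun z => hstep (mem_union_left _ (hY ▸ mem_univ z)), card_univ,
        card]
      exact min_le_left _ _
    · have hgrow : #Y < #(Y ∪ Y.image (· + 1)) :=
        card_lt_card_union_image_add_one (hX.add (by simp)) hY
      have := card_le_card hstep
      omega

lemma card_add_card_le_of_arcsMeet {k : ℕ} (hn : 2 * k ≤ n) {SA SB : Finset (ZMod n)}
    (hBA : SB ⊆ SA) (hSB : SB.Nonempty) (hmeet : ∀ b ∈ SB, ∀ a ∈ SA, ArcsMeet k a b) :
    #SA + #SB ≤ 2 * k := by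
  set U := SB + {(k : ZMod n)} + (range (n - 2 * k + 1)).image (Nat.cast : ℕ → ZMod n)
  have hdisj : Disjoint U SA := by
    refine disjoint_left.mpr fun u hu hua => ?_
    simp only [U, mem_add, mem_singleton, mem_image, mem_range] at hu
    obtain ⟨_, ⟨b, hb, _, rfl, rfl⟩, _, ⟨j, hj, rfl⟩, rfl⟩ := hu
    refine not_arcsMeet_add_natCast (k := k) (j := j) (by omega) b (hmeet b hb _ ?_)
    simpa [add_assoc] using hua
  have hU : #U + #SA ≤ n := by
    rw [← card_union_of_disjoint hdisj]
    exact (card_le_univ _).trans_eq (ZMod.card n)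
  have hUlow : min n (#SB + (n - 2 * k)) ≤ #U := by
    have := min_le_card_add_image_range (hSB.add (singleton_nonempty (k : ZMod n))) (n - 2 * k)
    rwa [card_add_singleton] at this
  have hSA : 0 < #SA := card_pos.mpr (hSB.mono hBA)
  omega

end ZMod

section

variable {n : ℕ}

def cycIntAt (π : ZMod n ≃ Fin n) (k : ℕ) (t : ZMod n) : Finset (Fin n) :=
  (range k).image fun s : ℕ => π (t + s)

lemma cycInt_eq_range (π : ZMod n ≃ Fin n) (k : ℕ) :
    cycInt n π k = Set.range (cycIntAt π k) := by
  ext S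
  simp [cycInt, cycIntAt, eq_comm]

lemma arcsMeet_of_cycIntAt_inter_nonempty {π : ZMod n ≃ Fin n} {k : ℕ} {a b : ZMod n}
    (h : (cycIntAt π k b ∩ cycIntAt π k a).Nonempty) : ZMod.ArcsMeet k a b := by
  obtain ⟨x, hx⟩ := h
  simp only [cycIntAt, mem_inter, mem_image, mem_range] at hx
  obtain ⟨⟨q, hq, rfl⟩, ⟨p, hp, hpq⟩⟩ := hx
  exact ⟨p, hp, q, hq, π.injective hpq⟩

end

theorem stmt_11 (n k : ℕ) (hn : 2 * k ≤ n) (c : ℝ) (hc : 1 ≤ c)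
    (π : ZMod n ≃ Fin n)
    (A B : Set (Finset (Fin n))) (hBA : B ⊆ A) (hA : A ⊆ cycInt n π k)
    (hcross : ∀ b ∈ B, ∀ a ∈ A, (b ∩ a).Nonempty) :
    (A.ncard : ℝ) + c * B.ncard ≤ max (n : ℝ) ((c + 1) * k) := by
  rcases Nat.eq_zero_or_pos n with rfl | hn0
  · exact (π 0).elim0
  have : NeZero n := ⟨hn0.ne'⟩
  classical
  rw [cycInt_eq_range] at hA
  set SA := (cycIntAt π k ⁻¹' A).toFinset
  set SB := (cycIntAt π k ⁻¹' B).toFinset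
  have hAcard : A.ncard ≤ #SA := Set.ncard_le_card_toFinset_preimage hA
  have hBcard : B.ncard ≤ #SB := Set.ncard_le_card_toFinset_preimage (hBA.trans hA)
  rcases B.eq_empty_or_nonempty with rfl | ⟨b, hb⟩
  · have hSA : #SA ≤ n := (card_le_univ SA).trans (ZMod.card n).le
    simp only [Set.ncard_empty, Nat.cast_zero, mul_zero, add_zero]
    exact le_max_of_le_left (by exact_mod_cast hAcard.trans hSA)
  have hSB : SB.Nonempty := by
    obtain ⟨t, rfl⟩ := hA (hBA hb)
    exact ⟨t, by simpa [SB] using hb⟩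
  have hSBA : SB ⊆ SA := Set.toFinset_subset_toFinset.mpr (Set.preimage_mono hBA)
  have hkey := ZMod.card_add_card_le_of_arcsMeet hn hSBA hSB fun b hb a ha =>
    arcsMeet_of_cycIntAt_inter_nonempty
      (hcross _ (by simpa [SB] using hb) _ (by simpa [SA] using ha))
  have hSBk : #SB ≤ k := by
    have := card_le_card hSBA
    omega
  have hsum : (A.ncard : ℝ) + B.ncard ≤ 2 * k := by
    exact_mod_cast (by omega : A.ncard + B.ncard ≤ 2 * k)
  have hBk : (B.ncard : ℝ) ≤ k := by exact_mod_cast hBcard.trans hSBk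
  refine le_max_of_le_right ?_
  nlinarith
end
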